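/- Let L ≥ 1 be an integer, let S¹ = {x ∈ ℝ² : ‖x‖₂ = 1}, let X be uniformly distributed on S¹, let f : S¹ → {1, …, L} be any measurable encoding map, and let g : {1, …, L} → S¹ be any decoding map. Then E[‖X - g(f(X))‖₂²] ≥ 2 - 2 · sin(π/L)/(π/L). -/

import Mathlib

/-!
Since `‖x - y‖² = 2 - 2⟪x, y⟫` on the circle, it suffices to bound `∑ᵢ ∫_{Aᵢ} ⟪x, g i⟫` over the
cells `Aᵢ = f⁻¹' {i}`. Among sets of mass `m`, `∫_A ⟪x, u⟫` is largest for the arc of length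
`2πm` centred at `u` (bathtub principle, via `⟪x, u⟫ ≤ (⟪x, u⟫ - cos πm)⁺ + cos πm`), where it
equals `sin (πm) / π`. Concavity of `sin` on `[0, π]` then shows that `∑ᵢ sin (π mᵢ)` is largest
for equal masses `1 / L`. The uniform measure is identified with normalized arc length by
polar coordinates.
-/

open MeasureTheory Metric Real

/-- The uniform probability measure on the unit circle
`S¹ = {x ∈ ℝ² : ‖x‖₂ = 1}` (the normalized sphere measure). -/
noncomputable def sphereUniform :
    Measure (sphere (0 : EuclideanSpace ℝ (Fin 2)) 1) :=
  ((volume : Measure (EuclideanSpace ℝ (Fin 2))).toSphere Set.univ)⁻¹ •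
    (volume : Measure (EuclideanSpace ℝ (Fin 2))).toSphere

open Set
open scoped RealInnerProductSpace Pointwise

section NormedSpace
variable {E : Type*} [NormedAddCommGroup E] [NormedSpace ℝ E]

theorem Ioo_smul_coe_image_sphere (s : Set (sphere (0 : E) 1)) :
    Ioo (0 : ℝ) 1 • ((↑) '' s : Set E) =
      {x | ‖x‖ ∈ Ioo (0 : ℝ) 1 ∧ ‖x‖⁻¹ • x ∈ ((↑) '' s : Set E)} := by
  ext x
  constructor
  · rintro ⟨t, ht, _, ⟨y, hy, rfl⟩, rfl⟩
    have hnorm : ‖t • (y : E)‖ = t := by simp [norm_smul, abs_of_pos ht.1]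
    show ‖t • (y : E)‖ ∈ _ ∧ ‖t • (y : E)‖⁻¹ • t • (y : E) ∈ _
    rw [hnorm, smul_smul, inv_mul_cancel₀ ht.1.ne', one_smul]
    exact ⟨ht, mem_image_of_mem _ hy⟩
  · rintro ⟨hx, hxs⟩
    refine ⟨‖x‖, hx, _, hxs, ?_⟩
    simp only [smul_smul, mul_inv_cancel₀ hx.1.ne', one_smul]

theorem smul_coe_mem_Ioo_smul_coe_image_sphere_iff (s : Set (sphere (0 : E) 1))
    {r : ℝ} (hr : 0 < r) (x : sphere (0 : E) 1) :
    r • (x : E) ∈ Ioo (0 : ℝ) 1 • ((↑) '' s : Set E) ↔ r < 1 ∧ x ∈ s := by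
  have hnorm : ‖r • (x : E)‖ = r := by simp [norm_smul, abs_of_pos hr]
  rw [Ioo_smul_coe_image_sphere, mem_ofPred_eq, hnorm, smul_smul, inv_mul_cancel₀ hr.ne',
    one_smul, Subtype.val_injective.mem_set_image]
  simp [hr]

theorem measurableSet_Ioo_smul_coe_image_sphere [MeasurableSpace E] [BorelSpace E]
    [SecondCountableTopology E] {s : Set (sphere (0 : E) 1)} (hs : MeasurableSet s) :
    MeasurableSet (Ioo (0 : ℝ) 1 • ((↑) '' s : Set E)) := by
  rw [Ioo_smul_coe_image_sphere]
  have himage : MeasurableSet ((↑) '' s : Set E) :=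
    (MeasurableEmbedding.subtype_coe isClosed_sphere.measurableSet).measurableSet_image.2 hs
  exact (measurable_norm measurableSet_Ioo).inter
    ((measurable_norm.inv.smul measurable_id) himage)

end NormedSpace

theorem norm_sub_sq_eq_two_sub_two_inner {F : Type*} [NormedAddCommGroup F]
    [InnerProductSpace ℝ F] (x y : sphere (0 : F) 1) :
    ‖(x : F) - y‖ ^ 2 = 2 - 2 * ⟪(x : F), y⟫ := by
  rw [norm_sub_sq_real, norm_eq_of_mem_sphere, norm_eq_of_mem_sphere]
  ring

theorem setIntegral_le_integral_max_sub_add {α : Type*} [MeasurableSpace α] {μ : Measure α}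
    [IsFiniteMeasure μ] {φ : α → ℝ} (hφ : Integrable φ μ) (A : Set α) (c : ℝ) :
    ∫ x in A, φ x ∂μ ≤ ∫ x, max (φ x - c) 0 ∂μ + c * μ.real A := by
  have hpos : Integrable (fun x => max (φ x - c) 0) μ := (hφ.sub (integrable_const c)).pos_part
  calc ∫ x in A, φ x ∂μ
      ≤ ∫ x in A, (max (φ x - c) 0 + c) ∂μ :=
        setIntegral_mono hφ.integrableOn (hpos.integrableOn.add (integrable_const c))
          fun x => by linarith [le_max_left (φ x - c) 0]
    _ = ∫ x in A, max (φ x - c) 0 ∂μ + c * μ.real A := by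
        rw [integral_add hpos.integrableOn (integrable_const c), setIntegral_const, smul_eq_mul,
          mul_comm]
    _ ≤ ∫ x, max (φ x - c) 0 ∂μ + c * μ.real A :=
        add_le_add_left (setIntegral_le_integral hpos (ae_of_all _ fun x => le_max_right _ _)) _

theorem integral_comp_eq_sum_setIntegral_preimage {α ι E : Type*} [MeasurableSpace α]
    {μ : Measure α} [Fintype ι] [MeasurableSpace ι] [MeasurableSingletonClass ι]
    [NormedAddCommGroup E] [NormedSpace ℝ E] {f : α → ι} (hf : Measurable f) {F : ι → α → E}
    (hF : ∀ i, Integrable (F i) μ) :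
    ∫ x, F (f x) x ∂μ = ∑ i, ∫ x in f ⁻¹' {i}, F i x ∂μ := by
  have hfiber : ∀ i, EqOn (fun x => F (f x) x) (F i) (f ⁻¹' {i}) := fun i x hx => by
    show F (f x) x = F i x
    rw [mem_singleton_iff.1 hx]
  have hcover : (⋃ i, f ⁻¹' {i}) = univ := iUnion_eq_univ_iff.2 fun x => ⟨f x, rfl⟩
  have hmeas : ∀ i, MeasurableSet (f ⁻¹' {i}) := fun i => hf (measurableSet_singleton i)
  rw [← setIntegral_univ, ← hcover, integral_iUnion_fintype hmeas (pairwise_disjoint_fiber f)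
    fun i => (hF i).integrableOn.congr_fun (hfiber i).symm (hmeas i)]
  exact Finset.sum_congr rfl fun i _ => setIntegral_congr_fun (hmeas i) (hfiber i)

theorem ConcaveOn.sum_le_card_mul_map_average {ι E : Type*} [AddCommGroup E] [Module ℝ E]
    {s : Set E} {f : E → ℝ} (hf : ConcaveOn ℝ s f) {t : Finset ι} (ht : t.Nonempty) {p : ι → E}
    (hp : ∀ i ∈ t, p i ∈ s) :
    ∑ i ∈ t, f (p i) ≤ t.card * f ((t.card : ℝ)⁻¹ • ∑ i ∈ t, p i) := by
  have hcard : (0 : ℝ) < t.card := by exact_mod_cast ht.card_pos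
  have hjensen := hf.le_map_sum (w := fun _ => (t.card : ℝ)⁻¹) (fun _ _ => by positivity)
    (by simp [hcard.ne']) hp
  rwa [← Finset.smul_sum, ← Finset.smul_sum, smul_eq_mul, inv_mul_le_iff₀ hcard] at hjensen

theorem sum_sin_pi_mul_le {ι : Type*} {t : Finset ι} (ht : t.Nonempty) {m : ι → ℝ}
    (hm : ∀ i ∈ t, 0 ≤ m i) (hsum : ∑ i ∈ t, m i = 1) :
    ∑ i ∈ t, sin (π * m i) ≤ t.card * sin (π / t.card) := by
  have hmem : ∀ i ∈ t, π * m i ∈ Icc 0 π := fun i hi =>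
    ⟨by have := hm i hi; positivity,
      mul_le_of_le_one_right pi_pos.le (hsum ▸ Finset.single_le_sum hm hi)⟩
  have := strictConcaveOn_sin_Icc.concaveOn.sum_le_card_mul_map_average ht hmem
  rwa [← Finset.mul_sum, hsum, smul_eq_mul, mul_one, inv_mul_eq_div] at this

theorem max_cos_sub_cos_eq_indicator {a θ : ℝ} (ha : a ∈ Icc 0 π) (hθ : |θ| ≤ π) :
    max (cos θ - cos a) 0 = (Ioo (-a) a).indicator (fun θ => cos θ - cos a) θ := by
  by_cases h : |θ| < a
  · have hcos : cos a ≤ cos θ :=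
      cos_abs θ ▸ cos_le_cos_of_nonneg_of_le_pi (abs_nonneg θ) ha.2 h.le
    rw [indicator_of_mem (show θ ∈ Ioo (-a) a from abs_lt.1 h), max_eq_left (sub_nonneg.2 hcos)]
  · have hcos : cos θ ≤ cos a := cos_abs θ ▸ cos_le_cos_of_nonneg_of_le_pi ha.1 hθ (not_lt.1 h)
    rw [indicator_of_notMem (show θ ∉ Ioo (-a) a from mt abs_lt.2 h),
      max_eq_right (sub_nonpos.2 hcos)]

theorem integral_max_cos_sub_cos (ψ : ℝ) {a : ℝ} (ha : a ∈ Icc 0 π) :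
    ∫ θ in (-π)..π, max (cos (θ - ψ) - cos a) 0 = 2 * (sin a - a * cos a) := by
  have hper : Function.Periodic (fun θ => max (cos θ - cos a) 0) (2 * π) := fun θ => by
    simp only [cos_add_two_pi]
  calc ∫ θ in (-π)..π, max (cos (θ - ψ) - cos a) 0
      = ∫ θ in (-π - ψ)..(-π - ψ + 2 * π), max (cos θ - cos a) 0 := by
        rw [intervalIntegral.integral_comp_sub_right (fun θ => max (cos θ - cos a) 0),
          show π - ψ = -π - ψ + 2 * π by ring]
    _ = ∫ θ in (-π)..(-π + 2 * π), max (cos θ - cos a) 0 := hper.intervalIntegral_add_eq _ _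
    _ = ∫ θ in Ioo (-π) π, (Ioo (-a) a).indicator (fun θ => cos θ - cos a) θ := by
        rw [show -π + 2 * π = π by ring, intervalIntegral.integral_of_le (by linarith [pi_pos]),
          integral_Ioc_eq_integral_Ioo]
        exact setIntegral_congr_fun measurableSet_Ioo fun θ hθ =>
          max_cos_sub_cos_eq_indicator ha (abs_le.2 ⟨hθ.1.le, hθ.2.le⟩)
    _ = ∫ θ in Ioo (-a) a, (cos θ - cos a) := by
        rw [setIntegral_indicator measurableSet_Ioo,
          inter_eq_right.2 (Ioo_subset_Ioo (neg_le_neg ha.2) ha.2)]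
    _ = 2 * (sin a - a * cos a) := by
        rw [← integral_Ioc_eq_integral_Ioo, ← intervalIntegral.integral_of_le (by linarith [ha.1]),
          intervalIntegral.integral_sub (continuous_cos.intervalIntegrable _ _)
            intervalIntegrable_const,
          integral_cos, intervalIntegral.integral_const, sin_neg, smul_eq_mul]
        ring

local notation "ℝ²" => EuclideanSpace ℝ (Fin 2)
local notation "S¹" => sphere (0 : ℝ²) 1

noncomputable def circlePoint (θ : ℝ) : S¹ :=
  ⟨!₂[cos θ, sin θ], by simp [EuclideanSpace.norm_eq, Fin.sum_univ_two]⟩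

theorem inner_circlePoint (θ ψ : ℝ) :
    ⟪(circlePoint θ : ℝ²), (circlePoint ψ : ℝ²)⟫ = cos (θ - ψ) := by
  simp [circlePoint, PiLp.inner_apply, Fin.sum_univ_two, cos_sub, mul_comm]

theorem continuous_circlePoint : Continuous circlePoint := by
  refine continuous_induced_rng.2 ((PiLp.continuous_toLp 2 _).comp (continuous_pi fun i => ?_))
  fin_cases i
  exacts [continuous_cos, continuous_sin]

theorem circlePoint_surjective : Function.Surjective circlePoint := by
  intro u
  have hu : ‖(u : ℝ²)‖ = 1 := by simp
  set z : ℂ := ⟨(u : ℝ²) 0, (u : ℝ²) 1⟩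
  have hz : ‖z‖ = 1 := by
    rw [EuclideanSpace.norm_eq, Fin.sum_univ_two] at hu
    simp only [Real.norm_eq_abs, sq_abs] at hu
    rw [Complex.norm_def, Complex.normSq_mk, ← sq, ← sq, hu]
  have hz0 : z ≠ 0 := by rintro h; simp [h] at hz
  refine ⟨z.arg, Subtype.ext ?_⟩
  ext i
  fin_cases i
  · simp [circlePoint, Complex.cos_arg hz0, hz, z]
  · simp [circlePoint, Complex.sin_arg, hz, z]

theorem volume_Ioo_smul_coe_image_eq {s : Set S¹} (hs : MeasurableSet s) :
    volume (Ioo (0 : ℝ) 1 • ((↑) '' s : Set ℝ²)) =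
      volume (circlePoint ⁻¹' s ∩ Ioo (-π) π) / 2 := by
  set K := Ioo (0 : ℝ) 1 • ((↑) '' s : Set ℝ²)
  set T := circlePoint ⁻¹' s ∩ Ioo (-π) π
  let e : ℝ × ℝ ≃ᵐ ℝ² :=
    MeasurableEquiv.finTwoArrow.symm.trans (MeasurableEquiv.toLp 2 (Fin 2 → ℝ))
  have he : MeasurePreserving e :=
    (PiLp.volume_preserving_toLp _).comp ((volume_preserving_finTwoArrow ℝ).symm _)
  have hT : MeasurableSet T := (continuous_circlePoint.measurable hs).inter measurableSet_Ioo
  have hK : MeasurableSet (e ⁻¹' K) := e.measurable (measurableSet_Ioo_smul_coe_image_sphere hs)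
  have hpolar : EqOn (fun p => ENNReal.ofReal p.1 • (e ⁻¹' K).indicator 1 (polarCoord.symm p))
      ((Ioo 0 1 ×ˢ T).indicator fun p => ENNReal.ofReal p.1) polarCoord.target := by
    rintro ⟨r, θ⟩ ⟨hr, hθ⟩
    change 0 < r at hr
    have he_polar : e (polarCoord.symm (r, θ)) = r • (circlePoint θ : ℝ²) := by
      ext i; fin_cases i <;> rfl
    have hmem : polarCoord.symm (r, θ) ∈ e ⁻¹' K ↔ (r, θ) ∈ Ioo 0 1 ×ˢ T := by
      rw [mem_preimage, he_polar, smul_coe_mem_Ioo_smul_coe_image_sphere_iff s hr]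
      simp [T, hr, hθ]
    by_cases h : (r, θ) ∈ Ioo 0 1 ×ˢ T
    · simp only [smul_eq_mul]
      rw [indicator_of_mem (hmem.2 h), indicator_of_mem h, Pi.one_apply, mul_one]
    · simp only [smul_eq_mul]
      rw [indicator_of_notMem (mt hmem.1 h), indicator_of_notMem h, mul_zero]
  have hhalf : ∫⁻ r in Ioo (0 : ℝ) 1, ENNReal.ofReal r = 2⁻¹ := by
    rw [← ofReal_integral_eq_lintegral_ofReal, integral_Ioc_eq_integral_Ioo.symm,
      ← intervalIntegral.integral_of_le zero_le_one, integral_id]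
    · simp
    · exact continuous_id.integrableOn_Icc.mono_set Ioo_subset_Icc_self
    · exact ae_restrict_of_forall_mem measurableSet_Ioo fun r hr => hr.1.le
  calc volume K = volume (e ⁻¹' K) := (he.measure_preimage_equiv K).symm
    _ = ∫⁻ p, (e ⁻¹' K).indicator 1 p := (lintegral_indicator_one hK).symm
    _ = ∫⁻ p in polarCoord.target,
          ENNReal.ofReal p.1 • (e ⁻¹' K).indicator 1 (polarCoord.symm p) :=
        (lintegral_comp_polarCoord_symm _).symm
    _ = ∫⁻ p in polarCoord.target, (Ioo 0 1 ×ˢ T).indicator (fun p => ENNReal.ofReal p.1) p :=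
        setLIntegral_congr_fun polarCoord.open_target.measurableSet hpolar
    _ = ∫⁻ p in Ioo 0 1 ×ˢ T, ENNReal.ofReal p.1 := by
        rw [lintegral_indicator (measurableSet_Ioo.prod hT), Measure.restrict_restrict
          (measurableSet_Ioo.prod hT), inter_eq_left.2]
        rintro ⟨r, θ⟩ ⟨hr, hθ⟩
        exact ⟨hr.1, hθ.2⟩
    _ = (∫⁻ r in Ioo 0 1, ENNReal.ofReal r) * volume T := by
        rw [Measure.volume_eq_prod, ← Measure.prod_restrict]
        simpa only [mul_one, lintegral_one, Measure.restrict_apply_univ] using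
          lintegral_prod_mul (μ := volume.restrict (Ioo 0 1)) (ν := volume.restrict T)
            ENNReal.measurable_ofReal.aemeasurable (aemeasurable_const (b := 1))
    _ = volume T / 2 := by
        rw [hhalf, mul_comm, div_eq_mul_inv]

theorem toSphere_apply_eq_volume_preimage_circlePoint {s : Set S¹} (hs : MeasurableSet s) :
    (volume : Measure ℝ²).toSphere s = volume (circlePoint ⁻¹' s ∩ Ioo (-π) π) := by
  rw [Measure.toSphere_apply' _ hs, volume_Ioo_smul_coe_image_eq hs, finrank_euclideanSpace_fin]
  push_cast
  exact ENNReal.mul_div_cancel' (by norm_num) (by norm_num)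

theorem sphereUniform_eq_map :
    sphereUniform =
      (ENNReal.ofReal (2 * π))⁻¹ • (volume.restrict (Ioo (-π) π)).map circlePoint := by
  ext s hs
  have hpre : MeasurableSet (circlePoint ⁻¹' s) := continuous_circlePoint.measurable hs
  rw [sphereUniform, Measure.smul_apply, Measure.smul_apply,
    Measure.map_apply continuous_circlePoint.measurable hs, Measure.restrict_apply hpre,
    toSphere_apply_eq_volume_preimage_circlePoint hs,
    toSphere_apply_eq_volume_preimage_circlePoint .univ]
  simp [two_mul]

instance : IsProbabilityMeasure sphereUniform := by
  have : NeZero (volume : Measure ℝ²).toSphere := ⟨Measure.toSphere_ne_zero _⟩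
  exact isProbabilityMeasureSMul

theorem integral_sphereUniform {h : S¹ → ℝ} (hh : Continuous h) :
    ∫ x, h x ∂sphereUniform = (2 * π)⁻¹ * ∫ θ in (-π)..π, h (circlePoint θ) := by
  rw [sphereUniform_eq_map, integral_smul_measure, integral_map
    continuous_circlePoint.aemeasurable hh.aestronglyMeasurable,
    intervalIntegral.integral_of_le (by linarith [pi_pos]), integral_Ioc_eq_integral_Ioo,
    ENNReal.toReal_inv, ENNReal.toReal_ofReal (by positivity), smul_eq_mul]

theorem integrable_inner_sphereUniform {q : S¹ → S¹} (hq : Measurable q) :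
    Integrable (fun x : S¹ => ⟪(x : ℝ²), q x⟫) sphereUniform :=
  Integrable.of_bound (by fun_prop) 1 <| ae_of_all _ fun x =>
    (norm_inner_le_norm (x : ℝ²) (q x)).trans_eq (by simp)

theorem integral_max_inner_sub_cos (u : S¹) {a : ℝ} (ha : a ∈ Icc 0 π) :
    ∫ x, max (⟪(x : ℝ²), u⟫ - cos a) 0 ∂sphereUniform = (sin a - a * cos a) / π := by
  obtain ⟨ψ, rfl⟩ := circlePoint_surjective u
  rw [integral_sphereUniform (by fun_prop)]
  simp only [inner_circlePoint, integral_max_cos_sub_cos ψ ha]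
  field_simp

theorem setIntegral_inner_le_sin (u : S¹) (A : Set S¹) :
    ∫ x in A, ⟪(x : ℝ²), u⟫ ∂sphereUniform ≤ sin (π * sphereUniform.real A) / π := by
  set m := sphereUniform.real A
  have ha : π * m ∈ Icc 0 π := ⟨by positivity, mul_le_of_le_one_right pi_pos.le measureReal_le_one⟩
  -- the cap `{x | cos (π * m) ≤ ⟪x, u⟫}` is an arc of length `2πm`, so it has the mass of `A`
  calc ∫ x in A, ⟪(x : ℝ²), u⟫ ∂sphereUniform
      ≤ ∫ x, max (⟪(x : ℝ²), u⟫ - cos (π * m)) 0 ∂sphereUniform + cos (π * m) * m :=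
        setIntegral_le_integral_max_sub_add (integrable_inner_sphereUniform measurable_const) A _
    _ = sin (π * m) / π := by
        rw [integral_max_inner_sub_cos u ha]
        field_simp
        ring

theorem integral_inner_comp_le {ι : Type*} [Fintype ι] [Nonempty ι] [MeasurableSpace ι]
    [MeasurableSingletonClass ι] {f : S¹ → ι} (hf : Measurable f) (g : ι → S¹) :
    ∫ x, ⟪(x : ℝ²), g (f x)⟫ ∂sphereUniform
      ≤ sin (π / Fintype.card ι) / (π / Fintype.card ι) := by
  set n : ℝ := (Fintype.card ι : ℝ)
  have hmass : ∑ i, sphereUniform.real (f ⁻¹' {i}) = 1 := by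
    rw [sum_measureReal_preimage_singleton _ fun i _ => hf (measurableSet_singleton i)]
    simp
  calc ∫ x, ⟪(x : ℝ²), g (f x)⟫ ∂sphereUniform
      = ∑ i, ∫ x in f ⁻¹' {i}, ⟪(x : ℝ²), g i⟫ ∂sphereUniform :=
        integral_comp_eq_sum_setIntegral_preimage hf fun i =>
          integrable_inner_sphereUniform measurable_const
    _ ≤ ∑ i, sin (π * sphereUniform.real (f ⁻¹' {i})) / π :=
        Finset.sum_le_sum fun i _ => setIntegral_inner_le_sin (g i) _
    _ ≤ n * sin (π / n) / π := by
        rw [← Finset.sum_div]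
        gcongr
        exact sum_sin_pi_mul_le Finset.univ_nonempty (fun _ _ => measureReal_nonneg) hmass
    _ = sin (π / n) / (π / n) := by
        field_simp

/-- Core lower bound of Theorem 3: for `X` uniform on the unit circle, any `L`-level
encoder `f` and any decoder `g` with reconstructions on the unit circle satisfy
`E[‖X - g(f(X))‖²] ≥ 2 - 2 sin(π/L)/(π/L)`. -/
theorem unit_circle_quantizer_lower_bound (L : ℕ) (hL : 1 ≤ L)
    {Ω : Type*} [MeasurableSpace Ω] (μ : Measure Ω) [IsProbabilityMeasure μ]
    (X : Ω → sphere (0 : EuclideanSpace ℝ (Fin 2)) 1) (hXm : Measurable X)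
    (hX : Measure.map X μ = sphereUniform)
    (f : sphere (0 : EuclideanSpace ℝ (Fin 2)) 1 → Fin L) (hf : Measurable f)
    (g : Fin L → sphere (0 : EuclideanSpace ℝ (Fin 2)) 1) :
    2 - 2 * (Real.sin (π / L) / (π / L))
      ≤ ∫ ω, ‖(X ω : EuclideanSpace ℝ (Fin 2)) - (g (f (X ω)) : EuclideanSpace ℝ (Fin 2))‖ ^ 2 ∂μ := by
  have : Nonempty (Fin L) := ⟨⟨0, hL⟩⟩
  have hq : Measurable fun x => g (f x) := (measurable_of_countable g).comp hf
  have hdistortion : ∫ ω, ‖(X ω : ℝ²) - g (f (X ω))‖ ^ 2 ∂μ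
      = 2 - 2 * ∫ x, ⟪(x : ℝ²), g (f x)⟫ ∂sphereUniform := by
    rw [← integral_map (f := fun x : S¹ => ‖(x : ℝ²) - g (f x)‖ ^ 2) hXm.aemeasurable
      (by fun_prop), hX]
    simp only [norm_sub_sq_eq_two_sub_two_inner]
    rw [integral_sub (integrable_const 2) ((integrable_inner_sphereUniform hq).const_mul 2),
      integral_const_mul, integral_const, probReal_univ, one_smul]
  have hbound := integral_inner_comp_le hf g
  rw [Fintype.card_fin] at hbound
  linarith
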